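/- Let κ₁ : 𝔹^m → 𝔹 be non-constant and define κ : 𝔹^{2m+1} → 𝔹 by κ(y, z, x_n) = κ₁(z) if x_n = 1 and κ₁(y) if x_n = 0. For a point v = (u, u, 1) with κ₁(u) = 1, feature n = 2m+1 is relevant: there exists an AXp of (v, 1) containing n. -/

import Mathlib

open Finset

/-- `X` is a weak abductive explanation (weak AXp) for classifier `κ` at point `v`:
every point agreeing with `v` on `X` gets the same prediction as `v`. -/
def weakAXp {n : ℕ} (κ : (Fin n → Bool) → Bool) (v : Fin n → Bool)
    (X : Finset (Fin n)) : Prop :=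
  ∀ x : Fin n → Bool, (∀ i ∈ X, x i = v i) → κ x = κ v

/-- `X` is an AXp: a subset-minimal weak AXp. -/
def AXp {n : ℕ} (κ : (Fin n → Bool) → Bool) (v : Fin n → Bool)
    (X : Finset (Fin n)) : Prop :=
  weakAXp κ v X ∧ ∀ X' ⊂ X, ¬ weakAXp κ v X'

/-- `Y` is a weak contrastive explanation (weak CXp) for `κ` at `v`:
some point agreeing with `v` outside `Y` gets a different prediction. -/
def weakCXp {n : ℕ} (κ : (Fin n → Bool) → Bool) (v : Fin n → Bool)
    (Y : Finset (Fin n)) : Prop :=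
  ∃ x : Fin n → Bool, (∀ i ∉ Y, x i = v i) ∧ κ x ≠ κ v

/-- `Y` is a CXp: a subset-minimal weak CXp. -/
def CXp {n : ℕ} (κ : (Fin n → Bool) → Bool) (v : Fin n → Bool)
    (Y : Finset (Fin n)) : Prop :=
  weakCXp κ v Y ∧ ∀ Y' ⊂ Y, ¬ weakCXp κ v Y'

/-- A feature is relevant if it occurs in some AXp. -/
def Relevant {n : ℕ} (κ : (Fin n → Bool) → Bool) (v : Fin n → Bool) (i : Fin n) : Prop :=
  ∃ X, AXp κ v X ∧ i ∈ X

/-- A feature is irrelevant if it occurs in no AXp. -/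
def Irrelevant {n : ℕ} (κ : (Fin n → Bool) → Bool) (v : Fin n → Bool) (i : Fin n) : Prop :=
  ¬ Relevant κ v i

/-- `phi κ v S` : average value of `κ` over points agreeing with `v` on `S`
(uniform distribution). -/
noncomputable def phi {n : ℕ} (κ : (Fin n → Bool) → Bool) (v : Fin n → Bool)
    (S : Finset (Fin n)) : ℝ :=
  (1 / 2 ^ (n - S.card)) *
    ∑ x ∈ Finset.univ.filter (fun x : Fin n → Bool => ∀ i ∈ S, x i = v i),
      (if κ x then (1 : ℝ) else 0)

/-- Shapley value of feature `i` for classifier `κ` at point `v`. -/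
noncomputable def Sv {n : ℕ} (κ : (Fin n → Bool) → Bool) (v : Fin n → Bool)
    (i : Fin n) : ℝ :=
  ∑ S ∈ (Finset.univ.erase i).powerset,
    ((S.card.factorial * (n - S.card - 1).factorial : ℝ) / n.factorial) *
      (phi κ v (insert i S) - phi κ v S)

theorem exists_AXp_subset {n : ℕ} (κ : (Fin n → Bool) → Bool) (v : Fin n → Bool)
    (X : Finset (Fin n)) (hX : weakAXp κ v X) : ∃ X' ⊆ X, AXp κ v X' := by
  induction X using Finset.strongInductionOn with
  | _ X ih =>
    by_cases h : ∀ X' ⊂ X, ¬ weakAXp κ v X'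
    · exact ⟨X, subset_rfl, hX, h⟩
    · push_neg at h
      obtain ⟨X', hsub, hX'⟩ := h
      obtain ⟨X'', h1, h2⟩ := ih X' hsub hX'
      exact ⟨X'', h1.trans hsub.subset, h2⟩

/-- In the two-block construction `κ(y,z,xₙ) = if xₙ then κ₁ z else κ₁ y` on
`n = 2m+1` features, with `v = (u,u,1)` and `κ₁ u = true`, feature `n` is
relevant. -/
theorem stmt12 (m : ℕ) (κ₁ : (Fin m → Bool) → Bool)
    (h1 : ∃ a b, κ₁ a ≠ κ₁ b) (u : Fin m → Bool) (hu : κ₁ u = true)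
    (κ : (Fin (2 * m + 1) → Bool) → Bool)
    (hκ : ∀ x, κ x =
      if x (Fin.last (2 * m)) then
        κ₁ (fun i => x (Fin.castLE (by omega) (Fin.natAdd m i)))
      else κ₁ (fun i => x (Fin.castLE (by omega : m ≤ 2 * m + 1) i)))
    (v : Fin (2 * m + 1) → Bool)
    (hv : ∀ j : Fin (2 * m + 1), v j =
      if h : (j : ℕ) < m then u ⟨j, h⟩
      else if h2 : (j : ℕ) < m + m then u ⟨(j : ℕ) - m, by omega⟩
      else true) :
    Relevant κ v (Fin.last (2 * m)) := by
  obtain ⟨a, b, hab⟩ := h1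
  -- a point where κ₁ is false
  obtain ⟨w, hw⟩ : ∃ w, κ₁ w = false := by
    cases hb : κ₁ b
    · exact ⟨b, hb⟩
    · cases ha : κ₁ a
      · exact ⟨a, ha⟩
      · exact absurd (ha.trans hb.symm) hab
  have hvlast : v (Fin.last (2 * m)) = true := by
    rw [hv]
    simp only [Fin.val_last]
    rw [dif_neg (by omega), dif_neg (by omega)]
  have hvsecond : ∀ i : Fin m,
      v (Fin.castLE (by omega) (Fin.natAdd m i)) = u i := by
    intro i
    rw [hv]
    have hval : ((Fin.castLE (by omega) (Fin.natAdd m i) : Fin (2*m+1)) : ℕ) = m + i := rfl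
    rw [dif_neg (by omega), dif_pos (by omega)]
    congr 1
    ext
    simp
  have hκv : κ v = true := by
    rw [hκ, hvlast]
    simp only [if_true]
    have : (fun i : Fin m => v (Fin.castLE (by omega) (Fin.natAdd m i))) = u :=
      funext hvsecond
    rw [this, hu]
  set W : Finset (Fin (2*m+1)) := Finset.univ.filter (fun j => m ≤ (j : ℕ)) with hWdef
  have hlastW : Fin.last (2 * m) ∈ W := by
    simp [hWdef, Fin.val_last]; omega
  have hWweak : weakAXp κ v W := by
    intro x hx
    have hxlast : x (Fin.last (2 * m)) = true := (hx _ hlastW).trans hvlast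
    rw [hκ, hxlast, hκv]
    simp only [if_true]
    have : (fun i : Fin m => x (Fin.castLE (by omega) (Fin.natAdd m i))) = u := by
      funext i
      have hmem : (Fin.castLE (by omega) (Fin.natAdd m i) : Fin (2*m+1)) ∈ W := by
        simp [hWdef]
      rw [hx _ hmem, hvsecond]
    rw [this, hu]
  obtain ⟨X, hXW, hAXp⟩ := exists_AXp_subset κ v W hWweak
  refine ⟨X, hAXp, ?_⟩
  by_contra hlast
  -- counterexample point
  set x : Fin (2*m+1) → Bool := fun j =>
    if h : (j : ℕ) < m then w ⟨j, h⟩ else if (j : ℕ) = 2 * m then false else v j with hxdef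
  have hagree : ∀ i ∈ X, x i = v i := by
    intro i hi
    have hiW : i ∈ W := hXW hi
    have him : m ≤ (i : ℕ) := by simpa [hWdef] using hiW
    have hne : (i : ℕ) ≠ 2 * m := by
      intro hc
      apply hlast
      have : i = Fin.last (2 * m) := by ext; simpa [Fin.val_last] using hc
      rwa [this] at hi
    simp [hxdef, Nat.not_lt.mpr him, hne]
  have hxfalse : κ x = false := by
    rw [hκ]
    have hxlast : x (Fin.last (2 * m)) = false := by
      simp [hxdef, Fin.val_last]
      omega
    rw [hxlast]
    simp only [Bool.false_eq_true, if_false]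
    have : (fun i : Fin m => x (Fin.castLE (by omega : m ≤ 2 * m + 1) i)) = w := by
      funext i
      have hval : ((Fin.castLE (by omega : m ≤ 2 * m + 1) i : Fin (2*m+1)) : ℕ) = (i : ℕ) := rfl
      have hlt : ((Fin.castLE (by omega : m ≤ 2 * m + 1) i : Fin (2*m+1)) : ℕ) < m := by
        rw [hval]; exact i.isLt
      simp only [hxdef, dif_pos hlt]
      congr 1
    rw [this, hw]
  have := hAXp.1 x hagree
  rw [hxfalse, hκv] at this
  exact Bool.false_ne_true this
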